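/- Theorem (general transformation of H-consistency bounds, conditional form). Let S ⊆ ℝ^{n+1} be a nonempty set of score vectors, ℓ : ℝ^{n+1} × {1,...,n+1} → [0,∞) an arbitrary surrogate loss, and Γ : [0,∞) → [0,∞) a function. For a probability vector q on {1,...,n+1} set C_ℓ(v,q) = Σ_{y=1}^{n+1} q(y) ℓ(v,y) and C_{01}(v,q) = 1 − q(𝗁(v)) (the conditional zero-one risk over n+1 labels). Assume that for every probability vector q on {1,...,n+1} and every v ∈ S: C_{01}(v,q) − inf_{w∈S} C_{01}(w,q) ≤ Γ( C_ℓ(v,q) − inf_{w∈S} C_ℓ(w,q) ). Define the abstention surrogate L(v,y) = ℓ(v,y) + (1−c) ℓ(v, n+1) for y ∈ {1,...,n}, with conditional risk C_L(v,p) = Σ_{y=1}^{n} p(y) L(v,y). Then for every conditional probability vector p on {1,...,n} and every v ∈ S: C_abs(v,p) − inf_{w∈S} C_abs(w,p) ≤ (2 − c) · Γ( (C_L(v,p) − inf_{w∈S} C_L(w,p)) / (2 − c) ). -/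

import Mathlib

/- Setting: `n = m + 1 ≥ 2` classes (indices `0, …, m` of `Fin (m+2)` via `castSucc`), the
abstention label is `Fin.last (m+1)`, and `c ∈ (0,1)` is the abstention cost. -/

/-- Maximum of the class scores. -/
noncomputable def classMax (m : ℕ) (v : Fin (m + 2) → ℝ) : ℝ :=
  Finset.univ.sup' Finset.univ_nonempty (fun i : Fin (m + 1) => v i.castSucc)

/-- The prediction `𝗁(v)` of a score vector: the abstention label `Fin.last (m+1)` if its score
is at least the maximal class score, and otherwise the smallest class index achieving the
maximal class score (deterministic tie-breaking). -/
noncomputable def pred (m : ℕ) (v : Fin (m + 2) → ℝ) : Fin (m + 2) :=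
  if classMax m v ≤ v (Fin.last (m + 1)) then Fin.last (m + 1)
  else Fin.castSucc <|
    (Finset.univ.filter fun i : Fin (m + 1) => v i.castSucc = classMax m v).min'
      (by
        obtain ⟨b, -, hb⟩ :=
          Finset.exists_mem_eq_sup' (Finset.univ_nonempty (α := Fin (m + 1)))
            (fun i : Fin (m + 1) => v i.castSucc)
        exact ⟨b, Finset.mem_filter.mpr ⟨Finset.mem_univ b, hb.symm⟩⟩)

/-- Extension of a conditional probability vector by `p (n+1) := 1 - c`. -/
noncomputable def pext (m : ℕ) (c : ℝ) (p : Fin (m + 1) → ℝ) : Fin (m + 2) → ℝ :=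
  Fin.snoc p (1 - c)

/-- Conditional abstention risk `C_abs(v, p) = 1 - p(𝗁(v))`. -/
noncomputable def condAbsRisk (m : ℕ) (c : ℝ) (p : Fin (m + 1) → ℝ)
    (v : Fin (m + 2) → ℝ) : ℝ :=
  1 - pext m c p (pred m v)

/-!
The extended vector `pext p` is nonnegative with total mass `2 - c`, so `q := pext p / (2 - c)`
is a probability vector on the `n + 1` labels. Both conditional risks of the abstention problem
are positive affine images of the corresponding risks under `q` with slope `2 - c`:
`C_abs(w, p) = (2 - c) C_{01}(w, q) + (c - 1)` and `C_L(w, p) = (2 - c) C_ℓ(w, q)`.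
Affine maps of positive slope scale the excess over the infimum by the slope, so the assumed
bound for `q` becomes the claimed one after multiplying by `2 - c`.
-/

section ExcessRisk

open scoped Pointwise

variable {α : Type*} {S : Set α} {f g : α → ℝ} {a b : ℝ}

theorem sub_csInf_image_of_affine (hS : S.Nonempty) (hg : BddBelow (g '' S)) (ha : 0 ≤ a)
    (hfg : ∀ w, f w = a * g w + b) (v : α) :
    f v - sInf (f '' S) = a * (g v - sInf (g '' S)) := by
  have hmono : Monotone fun x : ℝ => a * x + b := fun x y hxy => by
    dsimp only; gcongr
  have hf : f = (fun x : ℝ => a * x + b) ∘ g := funext hfg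
  rw [hf, Set.image_comp, ← hmono.map_csInf_of_continuousAt (by fun_prop) (hS.image g) hg]
  simp only [Function.comp_apply]
  ring

theorem sub_sInf_image_of_mul (ha : 0 ≤ a) (hfg : ∀ w, f w = a * g w) (v : α) :
    f v - sInf (f '' S) = a * (g v - sInf (g '' S)) := by
  have hf : f '' S = a • (g '' S) := by
    rw [← Set.image_smul, Set.image_image]
    simp only [hfg, smul_eq_mul]
  rw [hf, Real.sInf_smul_of_nonneg ha, hfg, smul_eq_mul, mul_sub]

end ExcessRisk

section Pext

variable {m : ℕ} {c : ℝ} {p : Fin (m + 1) → ℝ}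

theorem pext_nonneg (hc : c ≤ 1) (hp0 : ∀ y, 0 ≤ p y) (y : Fin (m + 2)) : 0 ≤ pext m c p y := by
  induction y using Fin.lastCases with
  | last => simpa [pext] using hc
  | cast i => simpa [pext] using hp0 i

theorem sum_pext_mul (hp1 : ∑ y, p y = 1) (f : Fin (m + 2) → ℝ) :
    ∑ y, pext m c p y * f y
      = ∑ y : Fin (m + 1), p y * (f y.castSucc + (1 - c) * f (Fin.last (m + 1))) := by
  simp only [Fin.sum_univ_castSucc (n := m + 1), pext, Fin.snoc_castSucc, Fin.snoc_last,
    mul_add, Finset.sum_add_distrib, ← Finset.sum_mul, hp1, one_mul]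

theorem sum_pext (hp1 : ∑ y, p y = 1) : ∑ y, pext m c p y = 2 - c := by
  have h := sum_pext_mul (c := c) hp1 1
  simp only [Pi.one_apply, mul_one, ← Finset.sum_mul, hp1, one_mul] at h
  linarith

end Pext

theorem stmt_7_general (m : ℕ) (c : ℝ) (hc : c ∈ Set.Ioo (0 : ℝ) 1)
    (S : Set (Fin (m + 2) → ℝ)) (hS : S.Nonempty)
    (ℓ : (Fin (m + 2) → ℝ) → Fin (m + 2) → ℝ)
    (Γ : ℝ → ℝ)
    (hbound : ∀ q : Fin (m + 2) → ℝ, (∀ y, 0 ≤ q y) → (∑ y, q y) = 1 →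
      ∀ v ∈ S,
        (1 - q (pred m v)) - sInf ((fun w => 1 - q (pred m w)) '' S)
          ≤ Γ ((∑ y, q y * ℓ v y) - sInf ((fun w => ∑ y, q y * ℓ w y) '' S)))
    (p : Fin (m + 1) → ℝ) (hp0 : ∀ y, 0 ≤ p y) (hp1 : ∑ y, p y = 1)
    (v : Fin (m + 2) → ℝ) (hv : v ∈ S) :
    condAbsRisk m c p v - sInf (condAbsRisk m c p '' S)
      ≤ (2 - c) *
        Γ (((∑ y : Fin (m + 1),
              p y * (ℓ v y.castSucc + (1 - c) * ℓ v (Fin.last (m + 1))))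
            - sInf ((fun w => ∑ y : Fin (m + 1),
                p y * (ℓ w y.castSucc + (1 - c) * ℓ w (Fin.last (m + 1)))) '' S))
          / (2 - c)) := by
  have ht : (0 : ℝ) < 2 - c := by linarith [hc.2]
  set q : Fin (m + 2) → ℝ := fun y => pext m c p y / (2 - c)
  have hq0 : ∀ y, 0 ≤ q y := fun y => div_nonneg (pext_nonneg hc.2.le hp0 y) ht.le
  have hq1 : ∑ y, q y = 1 := by
    rw [← Finset.sum_div, sum_pext hp1, div_self ht.ne']
  have hq_le_one : ∀ y, q y ≤ 1 := fun y =>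
    hq1 ▸ Finset.single_le_sum (fun z _ => hq0 z) (Finset.mem_univ y)
  have hexcess_abs := sub_csInf_image_of_affine (f := condAbsRisk m c p) hS
    ⟨0, Set.forall_mem_image.2 fun w _ => sub_nonneg.2 (hq_le_one (pred m w))⟩ ht.le
    (b := c - 1) (fun w => by simp only [condAbsRisk, q]; field_simp; ring) v
  have hexcess_L := sub_sInf_image_of_mul (S := S) ht.le
    (f := fun w => ∑ y : Fin (m + 1), p y * (ℓ w y.castSucc + (1 - c) * ℓ w (Fin.last (m + 1))))
    (g := fun w => ∑ y, q y * ℓ w y)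
    (fun w => by simp only [q, Finset.mul_sum, ← sum_pext_mul hp1]; field_simp) v
  rw [hexcess_abs, hexcess_L, mul_div_cancel_left₀ _ ht.ne']
  exact mul_le_mul_of_nonneg_left (hbound q hq0 hq1 v hv) ht.le

/-- **Theorem (general transformation of H-consistency bounds, conditional form).**
If the surrogate `ℓ` admits a conditional calibration bound with function `Γ` with respect
to the zero-one loss over `n + 1` labels (for every probability vector `q` on the `n + 1`
labels and every `v ∈ S`), then the abstention surrogate
`L(v, y) = ℓ(v, y) + (1 - c) ℓ(v, n+1)` admits the bound
`ΔC_abs ≤ (2 - c) Γ(ΔC_L / (2 - c))`. -/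
theorem stmt_7 (m : ℕ) (hm : 1 ≤ m) (c : ℝ) (hc : c ∈ Set.Ioo (0 : ℝ) 1)
    (S : Set (Fin (m + 2) → ℝ)) (hS : S.Nonempty)
    (ℓ : (Fin (m + 2) → ℝ) → Fin (m + 2) → ℝ) (hℓ : ∀ v y, 0 ≤ ℓ v y)
    (Γ : ℝ → ℝ)
    (hbound : ∀ q : Fin (m + 2) → ℝ, (∀ y, 0 ≤ q y) → (∑ y, q y) = 1 →
      ∀ v ∈ S,
        (1 - q (pred m v)) - sInf ((fun w => 1 - q (pred m w)) '' S)
          ≤ Γ ((∑ y, q y * ℓ v y) - sInf ((fun w => ∑ y, q y * ℓ w y) '' S)))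
    (p : Fin (m + 1) → ℝ) (hp0 : ∀ y, 0 ≤ p y) (hp1 : ∑ y, p y = 1)
    (v : Fin (m + 2) → ℝ) (hv : v ∈ S) :
    condAbsRisk m c p v - sInf (condAbsRisk m c p '' S)
      ≤ (2 - c) *
        Γ (((∑ y : Fin (m + 1),
              p y * (ℓ v y.castSucc + (1 - c) * ℓ v (Fin.last (m + 1))))
            - sInf ((fun w => ∑ y : Fin (m + 1),
                p y * (ℓ w y.castSucc + (1 - c) * ℓ w (Fin.last (m + 1)))) '' S))
          / (2 - c)) :=
  stmt_7_general m c hc S hS ℓ Γ hbound p hp0 hp1 v hv
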